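/- arXiv:1612.03262 — 2 statements merged into one kernel-verified Lean document; each statement's English description precedes it below -/
import Mathlib

section
/- The Kac–Paljutkin algebra H_8 has, up to isomorphism, exactly five simple left modules: the four one-dimensional modules V_1(b) for b ∈ {1, -1, i, -i}, on which x and y act by the scalar b^2 and z acts by the scalar b, and the two-dimensional module V_2 with basis v1, v2 and actions x·v1 = v2, x·v2 = v1, y·v1 = -v2, y·v2 = -v1, z·v1 = v1, z·v2 = -v2. These five modules are simple, pairwise non-isomorphic, and every simple left H_8-module is isomorphic to one of them. -/
/-!
Since the words `1, x, y, xy, z, xz, yz, xyz` form a basis, `H₈` is presented by `x, y, z` and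
its relations: a representation is a triple of operators satisfying them, which produces
`V₁(b)` for `b⁴ = 1` and `V₂`. The element `xy` is a central involution, so on a simple module
it acts by `±1`. If `xy = 1`, then `y = x` and `z² = x`, so `z⁴ = 1` and an eigenvector of `z`
spans a copy of `V₁(b)`. If `xy = -1`, then `y = -x`, `z² = 1` and `z` anticommutes with `x`,
so an eigenvector `v` of `z` and `xv` span a copy of `V₂`. In both cases the map from the
model is a nonzero morphism of simple modules, hence an isomorphism by Schur's lemma. The
`V₁(b)` are told apart by the eigenvalue of `z`, and from `V₂` by dimension.
-/

open TensorProduct Coalgebra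

noncomputable section

/-- The Kac–Paljutkin algebra structure: a Hopf algebra `H` over `K` together with
generators `x, y, z` satisfying the defining relations of `H₈`, such that
`1, x, y, xy, z, xz, yz, xyz` is a linear basis, with the prescribed
comultiplication, counit and antipode values. -/
structure KPAlg (K : Type*) (H : Type*) [Field K] [Ring H] [HopfAlgebra K H] where
  x : H
  y : H
  z : H
  basis_indep : LinearIndependent K
    ![(1 : H), x, y, x*y, z, x*z, y*z, x*y*z]
  basis_span : Submodule.span K
    (Set.range ![(1 : H), x, y, x*y, z, x*z, y*z, x*y*z]) = ⊤
  x_sq : x^2 = 1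
  y_sq : y^2 = 1
  xy_comm : x*y = y*x
  zx : z*x = y*z
  zy : z*y = x*z
  z_sq : z^2 = (2:K)⁻¹ • (1 + x + y - x*y)
  comul_x : comul (R := K) x = x ⊗ₜ[K] x
  comul_y : comul (R := K) y = y ⊗ₜ[K] y
  comul_z : comul (R := K) z =
    (2:K)⁻¹ • (z ⊗ₜ[K] z + z ⊗ₜ[K] (x*z) + (y*z) ⊗ₜ[K] z - (y*z) ⊗ₜ[K] (x*z))
  counit_x : counit (R := K) x = 1
  counit_y : counit (R := K) y = 1
  counit_z : counit (R := K) z = 1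
  antipode_x : HopfAlgebra.antipode (R := K) x = x
  antipode_y : HopfAlgebra.antipode (R := K) y = y
  antipode_z : HopfAlgebra.antipode (R := K) z = z

end

noncomputable section

open TensorProduct

variable (K : Type*) (H : Type*) [Field K] [Ring H] [HopfAlgebra K H]

/-- The data of a candidate left `H`-module structure on a `K`-vector space:
a `K`-bilinear action of `H`. -/
structure PreMod (M : Type*) [AddCommGroup M] [Module K M] where
  act : H →ₗ[K] M →ₗ[K] M

namespace PreMod

variable {K H}
variable {M : Type*} [AddCommGroup M] [Module K M]
variable {N : Type*} [AddCommGroup N] [Module K N]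

/-- The axioms making a `PreMod` a genuine left `H`-module. -/
def IsMod (Q : PreMod K H M) : Prop :=
  (∀ m : M, Q.act 1 m = m) ∧
  (∀ g h : H, ∀ m : M, Q.act (g * h) m = Q.act g (Q.act h m))

/-- Isomorphism of `H`-module data: an `H`-equivariant `K`-linear equivalence. -/
def Equiv (Q : PreMod K H M) (Q' : PreMod K H N) : Prop :=
  ∃ f : M ≃ₗ[K] N, ∀ (h : H) (m : M), f (Q.act h m) = Q'.act h (f m)

/-- A module is simple if it is nonzero and has no nonzero proper `H`-submodule. -/
def IsSimple (Q : PreMod K H M) : Prop :=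
  (∃ m : M, m ≠ 0) ∧
  ∀ S : Submodule K M, (∀ h : H, ∀ m ∈ S, Q.act h m ∈ S) → S = ⊥ ∨ S = ⊤

end PreMod

variable {K H}

/-- The one-dimensional simple `H₈`-module `V₁(b)`:
`x·v = b²v`, `y·v = b²v`, `z·v = bv`. -/
def KPAlg.IsV1 (P : KPAlg K H) (b : K) (Q : PreMod K H K) : Prop :=
  (∀ v : K, Q.act P.x v = b ^ 2 * v) ∧
  (∀ v : K, Q.act P.y v = b ^ 2 * v) ∧
  (∀ v : K, Q.act P.z v = b * v)

/-- The two-dimensional simple `H₈`-module `V₂`: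
`x·v₁ = v₂`, `x·v₂ = v₁`, `y·v₁ = -v₂`, `y·v₂ = -v₁`, `z·v₁ = v₁`, `z·v₂ = -v₂`. -/
def KPAlg.IsV2 (P : KPAlg K H) (Q : PreMod K H (K × K)) : Prop :=
  Q.act P.x ((1:K), (0:K)) = ((0:K), (1:K)) ∧
  Q.act P.x ((0:K), (1:K)) = ((1:K), (0:K)) ∧
  Q.act P.y ((1:K), (0:K)) = -((0:K), (1:K)) ∧
  Q.act P.y ((0:K), (1:K)) = -((1:K), (0:K)) ∧
  Q.act P.z ((1:K), (0:K)) = ((1:K), (0:K)) ∧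
  Q.act P.z ((0:K), (1:K)) = -((0:K), (1:K))


section Relations

variable {A B : Type*} [Ring A] [Algebra K A] [Ring B] [Algebra K B] {X Y Z : A}

variable (K) in
structure KPRel (X Y Z : A) : Prop where
  x_mul_x : X * X = 1
  y_mul_y : Y * Y = 1
  y_mul_x : Y * X = X * Y
  z_mul_x : Z * X = Y * Z
  z_mul_y : Z * Y = X * Z
  z_mul_z : Z * Z = (2 : K)⁻¹ • (1 + X + Y - X * Y)

def kpWords (X Y Z : A) : Fin 8 → A := ![1, X, Y, X * Y, Z, X * Z, Y * Z, X * Y * Z]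

namespace KPRel

theorem map (h : KPRel K X Y Z) (φ : A →ₐ[K] B) : KPRel K (φ X) (φ Y) (φ Z) where
  x_mul_x := by rw [← map_mul, h.x_mul_x, map_one]
  y_mul_y := by rw [← map_mul, h.y_mul_y, map_one]
  y_mul_x := by rw [← map_mul, h.y_mul_x, map_mul]
  z_mul_x := by rw [← map_mul, h.z_mul_x, map_mul]
  z_mul_y := by rw [← map_mul, h.z_mul_y, map_mul]
  z_mul_z := by rw [← map_mul, h.z_mul_z]; simp

/- Right-associated forms of the relations: with `mul_assoc` they rewrite any product of
generators into a combination of the words `kpWords X Y Z`. -/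

theorem x_mul_x_mul (h : KPRel K X Y Z) (t : A) : X * (X * t) = t := by
  rw [← mul_assoc, h.x_mul_x, one_mul]

theorem y_mul_y_mul (h : KPRel K X Y Z) (t : A) : Y * (Y * t) = t := by
  rw [← mul_assoc, h.y_mul_y, one_mul]

theorem y_mul_x_mul (h : KPRel K X Y Z) (t : A) : Y * (X * t) = X * (Y * t) := by
  rw [← mul_assoc, h.y_mul_x, mul_assoc]

theorem z_mul_x_mul (h : KPRel K X Y Z) (t : A) : Z * (X * t) = Y * (Z * t) := by
  rw [← mul_assoc, h.z_mul_x, mul_assoc]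

theorem z_mul_y_mul (h : KPRel K X Y Z) (t : A) : Z * (Y * t) = X * (Z * t) := by
  rw [← mul_assoc, h.z_mul_y, mul_assoc]

theorem commute_mul_x (h : KPRel K X Y Z) : Commute (X * Y) X := by
  simp [Commute, SemiconjBy, mul_assoc, h.y_mul_x]

theorem commute_mul_y (h : KPRel K X Y Z) : Commute (X * Y) Y := by
  simp [Commute, SemiconjBy, mul_assoc, h.y_mul_y, h.y_mul_x_mul]

theorem commute_mul_z (h : KPRel K X Y Z) : Commute (X * Y) Z := by
  simp [Commute, SemiconjBy, mul_assoc, h.z_mul_x_mul, h.z_mul_y, h.y_mul_x_mul]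

theorem mul_mul_self (h : KPRel K X Y Z) : X * Y * (X * Y) = 1 := by
  simp [mul_assoc, h.y_mul_x_mul, h.y_mul_y, h.x_mul_x]

theorem eq_of_mul_eq_one (h : KPRel K X Y Z) (hXY : X * Y = 1) : Y = X := by
  rw [← h.x_mul_x_mul Y, hXY, mul_one]

theorem eq_neg_of_mul_eq_neg_one (h : KPRel K X Y Z) (hXY : X * Y = -1) : Y = -X := by
  rw [← h.x_mul_x_mul Y, hXY, mul_neg_one]

variable [NeZero (2 : K)]

theorem z_mul_z_of_mul_eq_one (h : KPRel K X Y Z) (hXY : X * Y = 1) : Z * Z = X := by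
  rw [h.z_mul_z, hXY, h.eq_of_mul_eq_one hXY,
    show (1 : A) + X + X - 1 = (2 : K) • X by rw [two_smul]; abel, smul_smul,
    inv_mul_cancel₀ two_ne_zero, one_smul]

theorem z_mul_z_of_mul_eq_neg_one (h : KPRel K X Y Z) (hXY : X * Y = -1) : Z * Z = 1 := by
  rw [h.z_mul_z, hXY, h.eq_neg_of_mul_eq_neg_one hXY,
    show (1 : A) + X + -X - -1 = (2 : K) • 1 by rw [two_smul]; abel, smul_smul,
    inv_mul_cancel₀ two_ne_zero, one_smul]

end KPRel

end Relations

namespace KPAlg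

variable (P : KPAlg K H) {A : Type*} [Ring A] [Algebra K A] {X Y Z : A}

theorem kpRel : KPRel K P.x P.y P.z where
  x_mul_x := by rw [← sq, P.x_sq]
  y_mul_y := by rw [← sq, P.y_sq]
  y_mul_x := P.xy_comm.symm
  z_mul_x := P.zx
  z_mul_y := P.zy
  z_mul_z := by rw [← sq, P.z_sq]

def basis : Module.Basis (Fin 8) K H :=
  .mk P.basis_indep P.basis_span.ge

theorem basis_apply (j : Fin 8) : P.basis j = kpWords P.x P.y P.z j := by
  simp [basis, kpWords]

theorem adjoin_eq_top : Algebra.adjoin K {P.x, P.y, P.z} = ⊤ := by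
  have hx : P.x ∈ Algebra.adjoin K {P.x, P.y, P.z} := Algebra.subset_adjoin (by simp)
  have hy : P.y ∈ Algebra.adjoin K {P.x, P.y, P.z} := Algebra.subset_adjoin (by simp)
  have hz : P.z ∈ Algebra.adjoin K {P.x, P.y, P.z} := Algebra.subset_adjoin (by simp)
  have hspan : Submodule.span K (Set.range (kpWords P.x P.y P.z)) ≤
      Subalgebra.toSubmodule (Algebra.adjoin K {P.x, P.y, P.z}) := by
    refine Submodule.span_le.2 (Set.range_subset_iff.2 fun j => ?_)
    fin_cases j <;> simp [kpWords, Subalgebra.mul_mem, hx, hy, hz]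
  exact eq_top_iff.2 fun h _ => hspan (P.basis_span ▸ Submodule.mem_top)

theorem induction_on {p : H → Prop} (h : H) (x : p P.x) (y : p P.y) (z : p P.z)
    (algebraMap : ∀ c, p (algebraMap K H c)) (add : ∀ g h, p g → p h → p (g + h))
    (mul : ∀ g h, p g → p h → p (g * h)) : p h :=
  Algebra.adjoin_induction (p := fun h _ => p h) (by simp [x, y, z]) algebraMap
    (fun g h _ _ => add g h) (fun g h _ _ => mul g h) (P.adjoin_eq_top ▸ Algebra.mem_top)

/- By induction on `g` it suffices to take `g` a generator and `h` a basis word; then both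
sides rewrite to the same combination of words, in `H` and in `A`. -/
theorem map_mul_of_map_kpWords (hr : KPRel K X Y Z) (φ : H →ₗ[K] A)
    (hφ : ∀ j, φ (kpWords P.x P.y P.z j) = kpWords X Y Z j) (g h : H) :
    φ (g * h) = φ g * φ h := by
  simp only [Fin.forall_fin_succ, kpWords, Matrix.cons_val_zero, Matrix.cons_val_succ,
    mul_assoc] at hφ
  obtain ⟨h1, hx, hy, hxy, hz, hxz, hyz, hxyz, -⟩ := hφ
  have map_gen_mul : ∀ g ∈ ({P.x, P.y, P.z} : Set H), ∀ h, φ (g * h) = φ g * φ h := by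
    intro g hg
    suffices φ ∘ₗ LinearMap.mulLeft K g = LinearMap.mulLeft K (φ g) ∘ₗ φ from
      fun h => LinearMap.congr_fun this h
    refine P.basis.ext fun j => ?_
    simp only [Set.mem_insert_iff, Set.mem_singleton_iff] at hg
    rcases hg with rfl | rfl | rfl <;> fin_cases j <;>
      simp [basis_apply, kpWords, mul_assoc, mul_add, mul_sub,
        P.kpRel.x_mul_x, P.kpRel.y_mul_y, P.kpRel.y_mul_x, P.kpRel.z_mul_x, P.kpRel.z_mul_y,
        P.kpRel.z_mul_z, P.kpRel.x_mul_x_mul, P.kpRel.y_mul_y_mul, P.kpRel.y_mul_x_mul,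
        P.kpRel.z_mul_x_mul, P.kpRel.z_mul_y_mul,
        hr.x_mul_x, hr.y_mul_y, hr.y_mul_x, hr.z_mul_x, hr.z_mul_y, hr.z_mul_z,
        hr.x_mul_x_mul, hr.y_mul_y_mul, hr.y_mul_x_mul, hr.z_mul_x_mul, hr.z_mul_y_mul,
        h1, hx, hy, hxy, hz, hxz, hyz, hxyz]
  induction g using P.induction_on generalizing h with
  | x => exact map_gen_mul _ (by simp) h
  | y => exact map_gen_mul _ (by simp) h
  | z => exact map_gen_mul _ (by simp) h
  | algebraMap c => simp [Algebra.algebraMap_eq_smul_one, h1]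
  | add g g' ihg ihg' => simp [add_mul, ihg, ihg']
  | mul g g' ihg ihg' => rw [mul_assoc, ihg, ihg', ihg, mul_assoc]

theorem constr_kpWords (j : Fin 8) :
    P.basis.constr K (kpWords X Y Z) (kpWords P.x P.y P.z j) = kpWords X Y Z j := by
  rw [← P.basis_apply]; exact P.basis.constr_basis K _ j

def lift (hr : KPRel K X Y Z) : H →ₐ[K] A :=
  .ofLinearMap (P.basis.constr K (kpWords X Y Z)) (P.constr_kpWords 0)
    (P.map_mul_of_map_kpWords hr _ P.constr_kpWords)

theorem lift_x (hr : KPRel K X Y Z) : P.lift hr P.x = X := P.constr_kpWords 1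

theorem lift_y (hr : KPRel K X Y Z) : P.lift hr P.y = Y := P.constr_kpWords 2

theorem lift_z (hr : KPRel K X Y Z) : P.lift hr P.z = Z := P.constr_kpWords 4

end KPAlg

theorem LinearMap.exists_apply_eq_smul_or_neg_smul {R M : Type*} [CommRing R] [AddCommGroup M]
    [Module R M] (f : M →ₗ[R] M) {v : M} (hv : v ≠ 0) {c : R}
    (h : f (f v) = (c * c) • v) : ∃ w ≠ 0, f w = c • w ∨ f w = -c • w := by
  by_cases hw : f v + c • v = 0
  · exact ⟨v, hv, .inr (by rw [neg_smul, ← sub_eq_zero, sub_neg_eq_add, hw])⟩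
  · refine ⟨f v + c • v, hw, .inl ?_⟩
    rw [map_add, map_smul, h, smul_add, mul_smul, add_comm]

theorem LinearMap.apply_eq_fst_smul_add_snd_smul {R M : Type*} [Semiring R] [AddCommMonoid M]
    [Module R M] (f : R × R →ₗ[R] M) (p : R × R) :
    f p = p.1 • f (1, 0) + p.2 • f (0, 1) := by
  rw [← map_smul, ← map_smul, ← map_add]
  simp

namespace PreMod

variable {M N : Type*} [AddCommGroup M] [Module K M] [AddCommGroup N] [Module K N]

def ofAlgHom (ρ : H →ₐ[K] Module.End K M) : PreMod K H M := ⟨ρ.toLinearMap⟩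

theorem isMod_ofAlgHom (ρ : H →ₐ[K] Module.End K M) : (ofAlgHom ρ).IsMod :=
  ⟨fun m => by simp [ofAlgHom], fun g h m => by simp [ofAlgHom, Module.End.mul_apply]⟩

def toAlgHom (Q : PreMod K H M) (hQ : Q.IsMod) : H →ₐ[K] Module.End K M :=
  .ofLinearMap Q.act (LinearMap.ext hQ.1) fun g h => LinearMap.ext (hQ.2 g h)

theorem isSimple_of_self (Q : PreMod K H K) : Q.IsSimple :=
  ⟨⟨1, one_ne_zero⟩, fun S _ => Ideal.eq_bot_or_top S⟩

theorem Equiv.symm {Q : PreMod K H M} {Q' : PreMod K H N} (e : Q.Equiv Q') : Q'.Equiv Q := by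
  obtain ⟨f, hf⟩ := e
  exact ⟨f.symm, fun h n => f.injective (by rw [hf, f.apply_symm_apply, f.apply_symm_apply])⟩

theorem Equiv.finrank_eq {Q : PreMod K H M} {Q' : PreMod K H N} (e : Q.Equiv Q') :
    Module.finrank K M = Module.finrank K N :=
  e.choose.finrank_eq

/-- Schur's lemma: kernel and range of a morphism are submodules. -/
theorem equiv_of_isSimple {Q : PreMod K H M} {Q' : PreMod K H N} (hQ : Q.IsSimple)
    (hQ' : Q'.IsSimple) (g : M →ₗ[K] N) (hg : ∀ h m, g (Q.act h m) = Q'.act h (g m))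
    (hg0 : g ≠ 0) : Q.Equiv Q' := by
  have hker : LinearMap.ker g = ⊥ := by
    refine (hQ.2 _ fun h m hm => ?_).resolve_right fun htop => hg0 (LinearMap.ker_eq_top.1 htop)
    rw [LinearMap.mem_ker] at hm ⊢
    rw [hg, hm, map_zero]
  have hrange : LinearMap.range g = ⊤ := by
    refine (hQ'.2 _ ?_).resolve_left fun hbot => hg0 (LinearMap.range_eq_bot.1 hbot)
    rintro h _ ⟨m, rfl⟩
    exact ⟨Q.act h m, hg h m⟩
  exact ⟨.ofBijective g ⟨LinearMap.ker_eq_bot.1 hker, LinearMap.range_eq_top.1 hrange⟩, hg⟩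

end PreMod

theorem kpRel_pow_two [NeZero (2 : K)] {b : K} (hb : b ^ 4 = 1) : KPRel K (b ^ 2) (b ^ 2) b where
  x_mul_x := by linear_combination hb
  y_mul_y := by linear_combination hb
  y_mul_x := rfl
  z_mul_x := mul_comm _ _
  z_mul_y := mul_comm _ _
  z_mul_z := by
    rw [smul_eq_mul]
    field_simp
    linear_combination hb

theorem kpRel_prodComm [NeZero (2 : K)] :
    KPRel K (LinearEquiv.prodComm K K K : Module.End K (K × K))
      (-(LinearEquiv.prodComm K K K : Module.End K (K × K)))
      (LinearMap.prodMap LinearMap.id (-LinearMap.id)) where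
  x_mul_x := by ext <;> simp
  y_mul_y := by ext <;> simp
  y_mul_x := by ext <;> simp
  z_mul_x := by ext <;> simp
  z_mul_y := by ext <;> simp
  z_mul_z := by ext <;> simp [one_add_one_eq_two, inv_mul_cancel₀ (two_ne_zero (α := K))]

theorem pow_four_eq_one_of_mem {i : K} (hi : i ^ 2 = -1) :
    ∀ b ∈ ({1, -1, i, -i} : Set K), b ^ 4 = 1 := by
  rintro b (rfl | rfl | hb | hb)
  · norm_num
  · norm_num
  all_goals rw [Set.mem_singleton_iff.1 hb]; linear_combination (i ^ 2 - 1) * hi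

namespace KPAlg

variable (P : KPAlg K H) {M N : Type*} [AddCommGroup M] [Module K M] [AddCommGroup N]
  [Module K N] {Q : PreMod K H M}

theorem act_mem_of_gens (hQ : Q.IsMod) {S : Submodule K M} (hx : ∀ m ∈ S, Q.act P.x m ∈ S)
    (hy : ∀ m ∈ S, Q.act P.y m ∈ S) (hz : ∀ m ∈ S, Q.act P.z m ∈ S) (h : H) :
    ∀ m ∈ S, Q.act h m ∈ S := by
  induction h using P.induction_on with
  | x => exact hx
  | y => exact hy
  | z => exact hz
  | algebraMap c =>
    intro m hm
    rw [Algebra.algebraMap_eq_smul_one, map_smul, LinearMap.smul_apply, hQ.1]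
    exact S.smul_mem c hm
  | add g g' ihg ihg' => exact fun m hm => by simpa using S.add_mem (ihg m hm) (ihg' m hm)
  | mul g g' ihg ihg' => exact fun m hm => by simpa [hQ.2] using ihg _ (ihg' m hm)

theorem map_act_of_gens {Q' : PreMod K H N} (hQ : Q.IsMod) (hQ' : Q'.IsMod) (g : M →ₗ[K] N)
    (hx : ∀ m, g (Q.act P.x m) = Q'.act P.x (g m))
    (hy : ∀ m, g (Q.act P.y m) = Q'.act P.y (g m))
    (hz : ∀ m, g (Q.act P.z m) = Q'.act P.z (g m)) (h : H) (m : M) :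
    g (Q.act h m) = Q'.act h (g m) := by
  induction h using P.induction_on generalizing m with
  | x => exact hx m
  | y => exact hy m
  | z => exact hz m
  | algebraMap c => simp [Algebra.algebraMap_eq_smul_one, hQ.1, hQ'.1]
  | add g g' ihg ihg' => simp [ihg, ihg']
  | mul g g' ihg ihg' => rw [hQ.2, hQ'.2, ihg, ihg']

theorem kpRel_act (hQ : Q.IsMod) : KPRel K (Q.act P.x) (Q.act P.y) (Q.act P.z) :=
  P.kpRel.map (Q.toAlgHom hQ)

theorem exists_isV1 [NeZero (2 : K)] {b : K} (hb : b ^ 4 = 1) :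
    ∃ Q : PreMod K H K, Q.IsMod ∧ P.IsV1 b Q :=
  ⟨.ofAlgHom ((Algebra.lmul K K).comp (P.lift (kpRel_pow_two hb))), PreMod.isMod_ofAlgHom _,
    by simp [IsV1, PreMod.ofAlgHom, lift_x, lift_y, lift_z]⟩

theorem exists_isV2 [NeZero (2 : K)] : ∃ Q : PreMod K H (K × K), Q.IsMod ∧ P.IsV2 Q :=
  ⟨.ofAlgHom (P.lift kpRel_prodComm), PreMod.isMod_ofAlgHom _,
    by simp [IsV2, PreMod.ofAlgHom, lift_x, lift_y, lift_z]⟩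

variable {P}

theorem eq_of_isV1_of_equiv {b b' : K} {Q Q' : PreMod K H K} (hV : P.IsV1 b Q)
    (hV' : P.IsV1 b' Q') (e : Q.Equiv Q') : b = b' := by
  obtain ⟨f, hf⟩ := e
  have hfb : f b = b * f 1 := by rw [← smul_eq_mul, ← map_smul, smul_eq_mul, mul_one]
  have hz := hf P.z 1
  rw [hV.2.2, hV'.2.2, mul_one, hfb] at hz
  exact mul_right_cancel₀ (f.map_ne_zero_iff.2 one_ne_zero) hz

namespace IsV2

variable {Q : PreMod K H (K × K)}

theorem act_x_apply (hV : P.IsV2 Q) (p : K × K) : Q.act P.x p = (p.2, p.1) := by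
  rw [LinearMap.apply_eq_fst_smul_add_snd_smul, hV.1, hV.2.1]
  ext <;> simp

theorem act_y_apply (hV : P.IsV2 Q) (p : K × K) : Q.act P.y p = (-p.2, -p.1) := by
  rw [LinearMap.apply_eq_fst_smul_add_snd_smul, hV.2.2.1, hV.2.2.2.1]
  ext <;> simp

theorem act_z_apply (hV : P.IsV2 Q) (p : K × K) : Q.act P.z p = (p.1, -p.2) := by
  rw [LinearMap.apply_eq_fst_smul_add_snd_smul, hV.2.2.2.2.1, hV.2.2.2.2.2]
  ext <;> simp

theorem isSimple [NeZero (2 : K)] (hV : P.IsV2 Q) : Q.IsSimple := by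
  refine ⟨⟨(1, 0), by simp⟩, fun S hS => or_iff_not_imp_left.2 fun hS0 => ?_⟩
  have hx : ∀ q ∈ S, (q.2, q.1) ∈ S := fun q hq => hV.act_x_apply q ▸ hS P.x q hq
  have top_of_mem : ∀ a : K, a ≠ 0 → (a, 0) ∈ S → S = ⊤ := fun a ha haS => by
    have e₁ : ((1 : K), (0 : K)) ∈ S := by simpa [ha] using S.smul_mem a⁻¹ haS
    refine Submodule.eq_top_iff'.2 fun q => ?_
    simpa using S.add_mem (S.smul_mem q.1 e₁) (S.smul_mem q.2 (hx _ e₁))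
  obtain ⟨p, hpS, hp0⟩ := (Submodule.ne_bot_iff S).1 hS0
  have hz : (p.1, -p.2) ∈ S := hV.act_z_apply p ▸ hS P.z p hpS
  have h₁ : (p.1, 0) ∈ S := by
    convert S.smul_mem (2⁻¹ : K) (S.add_mem hpS hz) using 1
    ext <;> simp [← two_mul, two_ne_zero]
  have h₂ : (p.2, 0) ∈ S := by
    convert hx _ (S.smul_mem (2⁻¹ : K) (S.sub_mem hpS hz)) using 1
    ext <;> simp [← two_mul, two_ne_zero]
  by_cases hp1 : p.1 = 0
  · exact top_of_mem p.2 (fun hp2 => hp0 (Prod.ext hp1 hp2)) h₂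
  · exact top_of_mem p.1 hp1 h₁

end IsV2

variable (P)

theorem equiv_of_isV1 (hQ : Q.IsMod) (hS : Q.IsSimple) {b : K} {Q' : PreMod K H K}
    (hQ' : Q'.IsMod) (hV : P.IsV1 b Q') {w : M} (hw : w ≠ 0) (hx : Q.act P.x w = b ^ 2 • w)
    (hy : Q.act P.y w = b ^ 2 • w) (hz : Q.act P.z w = b • w) : Q.Equiv Q' := by
  refine (PreMod.equiv_of_isSimple (PreMod.isSimple_of_self Q') hS
    (LinearMap.toSpanSingleton K M w) (P.map_act_of_gens hQ' hQ _ ?_ ?_ ?_) ?_).symm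
  · intro c; simp [hV.1, hx, smul_smul, mul_comm]
  · intro c; simp [hV.2.1, hy, smul_smul, mul_comm]
  · intro c; simp [hV.2.2, hz, smul_smul, mul_comm]
  · exact fun h => hw (by simpa using LinearMap.congr_fun h 1)

theorem equiv_of_isV2 [NeZero (2 : K)] (hQ : Q.IsMod) (hS : Q.IsSimple)
    {Q' : PreMod K H (K × K)} (hQ' : Q'.IsMod) (hV : P.IsV2 Q') {v₁ v₂ : M} (hv : v₁ ≠ 0)
    (hx₁ : Q.act P.x v₁ = v₂) (hx₂ : Q.act P.x v₂ = v₁) (hy : Q.act P.y = -Q.act P.x)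
    (hz₁ : Q.act P.z v₁ = v₁) (hz₂ : Q.act P.z v₂ = -v₂) : Q.Equiv Q' := by
  refine (PreMod.equiv_of_isSimple hV.isSimple hS
    ((LinearMap.toSpanSingleton K M v₁).coprod (LinearMap.toSpanSingleton K M v₂))
    (P.map_act_of_gens hQ' hQ _ ?_ ?_ ?_) ?_).symm
  · intro p; simp [hV.act_x_apply, hx₁, hx₂, add_comm]
  · intro p; simp [hV.act_y_apply, hy, hx₁, hx₂, add_comm]
  · intro p; simp [hV.act_z_apply, hz₁, hz₂]
  · exact fun h => hv (by simpa using LinearMap.congr_fun h (1, 0))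

/- `xy` is central, so `ker (xy - 1)` is a submodule. -/
theorem act_x_mul_act_y_eq_one_or_eq_neg_one (hQ : Q.IsMod) (hS : Q.IsSimple) :
    Q.act P.x * Q.act P.y = 1 ∨ Q.act P.x * Q.act P.y = -1 := by
  set E := Q.act P.x * Q.act P.y
  have hr := P.kpRel_act hQ
  have mem_ker : ∀ T, Commute E T →
      ∀ m ∈ LinearMap.ker (E - 1), T m ∈ LinearMap.ker (E - 1) :=
    fun T hT m hm => by
      rw [LinearMap.mem_ker] at hm ⊢
      rw [← Module.End.mul_apply, (hT.sub_left (Commute.one_left T)).eq, Module.End.mul_apply,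
        hm, map_zero]
  rcases hS.2 _ (P.act_mem_of_gens hQ (mem_ker _ hr.commute_mul_x) (mem_ker _ hr.commute_mul_y)
    (mem_ker _ hr.commute_mul_z)) with hbot | htop
  · right
    refine LinearMap.ext fun m => eq_neg_of_add_eq_zero_left ?_
    have hm : E m + m ∈ LinearMap.ker (E - 1) := by
      rw [LinearMap.mem_ker, LinearMap.sub_apply, map_add, ← Module.End.mul_apply E E,
        hr.mul_mul_self]
      simp only [Module.End.one_apply]
      abel
    rwa [hbot, Submodule.mem_bot] at hm
  · left
    exact sub_eq_zero.1 (LinearMap.ker_eq_top.1 htop)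

variable [NeZero (2 : K)]

/- Here `z² = x` and `x² = 1`: an eigenvector of `x` for `±1` yields one of `z` for `±1`
or `±i`. -/
theorem exists_isV1_equiv_of_mul_eq_one (hQ : Q.IsMod) (hS : Q.IsSimple)
    (hE : Q.act P.x * Q.act P.y = 1) {i : K} (hi : i ^ 2 = -1) :
    ∃ b ∈ ({1, -1, i, -i} : Set K),
      ∃ Q' : PreMod K H K, Q'.IsMod ∧ P.IsV1 b Q' ∧ Q.Equiv Q' := by
  have hr := P.kpRel_act hQ
  have hzz : ∀ m, Q.act P.z (Q.act P.z m) = Q.act P.x m :=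
    fun m => LinearMap.congr_fun (hr.z_mul_z_of_mul_eq_one hE) m
  have of_eigenvector : ∀ b ∈ ({1, -1, i, -i} : Set K), ∀ w ≠ 0, Q.act P.z w = b • w →
      ∃ Q' : PreMod K H K, Q'.IsMod ∧ P.IsV1 b Q' ∧ Q.Equiv Q' := fun b hb w hw hz => by
    have hx : Q.act P.x w = b ^ 2 • w := by rw [← hzz, hz, map_smul, hz, smul_smul, sq]
    obtain ⟨Q', hQ', hV⟩ := P.exists_isV1 (pow_four_eq_one_of_mem hi b hb)
    exact ⟨Q', hQ', hV, P.equiv_of_isV1 hQ hS hQ' hV hw hx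
      (by rw [hr.eq_of_mul_eq_one hE, hx]) hz⟩
  obtain ⟨m, hm⟩ := hS.1
  obtain ⟨u, hu, hxu | hxu⟩ := (Q.act P.x).exists_apply_eq_smul_or_neg_smul hm (c := 1)
    (by simpa using LinearMap.congr_fun hr.x_mul_x m)
  · obtain ⟨w, hw, hzw | hzw⟩ := (Q.act P.z).exists_apply_eq_smul_or_neg_smul hu (c := 1)
      (by rw [hzz, hxu, mul_one])
    · exact ⟨1, by simp, of_eigenvector 1 (by simp) w hw hzw⟩
    · exact ⟨-1, by simp, of_eigenvector (-1) (by simp) w hw hzw⟩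
  · obtain ⟨w, hw, hzw | hzw⟩ := (Q.act P.z).exists_apply_eq_smul_or_neg_smul hu (c := i)
      (by rw [hzz, hxu, ← sq, hi])
    · exact ⟨i, by simp, of_eigenvector i (by simp) w hw hzw⟩
    · exact ⟨-i, by simp, of_eigenvector (-i) (by simp) w hw hzw⟩

/- Here `z² = 1` and `zx = -xz`: for an eigenvector `w` of `z`, the pair `w, xw` is a basis
of a copy of `V₂`, in one order or the other. -/
theorem exists_isV2_equiv_of_mul_eq_neg_one (hQ : Q.IsMod) (hS : Q.IsSimple)
    (hE : Q.act P.x * Q.act P.y = -1) :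
    ∃ Q' : PreMod K H (K × K), Q'.IsMod ∧ P.IsV2 Q' ∧ Q.Equiv Q' := by
  have hr := P.kpRel_act hQ
  have hy := hr.eq_neg_of_mul_eq_neg_one hE
  have hxx : ∀ m, Q.act P.x (Q.act P.x m) = m := fun m => by
    simpa using LinearMap.congr_fun hr.x_mul_x m
  have hzx : ∀ m, Q.act P.z (Q.act P.x m) = -Q.act P.x (Q.act P.z m) := fun m => by
    simpa [hy] using LinearMap.congr_fun hr.z_mul_x m
  obtain ⟨Q', hQ', hV⟩ := P.exists_isV2
  obtain ⟨m, hm⟩ := hS.1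
  obtain ⟨w, hw, hzw | hzw⟩ := (Q.act P.z).exists_apply_eq_smul_or_neg_smul hm (c := 1)
    (by simpa using LinearMap.congr_fun (hr.z_mul_z_of_mul_eq_neg_one hE) m)
  · rw [one_smul] at hzw
    exact ⟨Q', hQ', hV, P.equiv_of_isV2 hQ hS hQ' hV hw rfl (hxx w) hy hzw
      (by rw [hzx, hzw])⟩
  · rw [neg_smul, one_smul] at hzw
    have hxw : Q.act P.x w ≠ 0 := fun h => hw (by rw [← hxx w, h, map_zero])
    exact ⟨Q', hQ', hV, P.equiv_of_isV2 hQ hS hQ' hV hxw (hxx w) rfl hy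
      (by rw [hzx, hzw, map_neg, neg_neg]) hzw⟩

theorem isV1_or_isV2_of_isSimple (hQ : Q.IsMod) (hS : Q.IsSimple) {i : K} (hi : i ^ 2 = -1) :
    (∃ b ∈ ({1, -1, i, -i} : Set K),
        ∃ Q' : PreMod K H K, Q'.IsMod ∧ P.IsV1 b Q' ∧ Q.Equiv Q') ∨
      ∃ Q' : PreMod K H (K × K), Q'.IsMod ∧ P.IsV2 Q' ∧ Q.Equiv Q' :=
  (P.act_x_mul_act_y_eq_one_or_eq_neg_one hQ hS).imp
    (P.exists_isV1_equiv_of_mul_eq_one hQ hS · hi) (P.exists_isV2_equiv_of_mul_eq_neg_one hQ hS)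

end KPAlg

theorem classification_simple_modules_over_H8_general
    [CharZero K] (P : KPAlg K H) (i : K) (hi : i ^ 2 = -1) :
    (∀ b ∈ ({1, -1, i, -i} : Set K),
      ∃ Q : PreMod K H K, Q.IsMod ∧ P.IsV1 b Q ∧ Q.IsSimple) ∧
    (∃ Q : PreMod K H (K × K), Q.IsMod ∧ P.IsV2 Q ∧ Q.IsSimple) ∧
    (∀ b ∈ ({1, -1, i, -i} : Set K), ∀ b' ∈ ({1, -1, i, -i} : Set K), b ≠ b' →
      ∀ (Q Q' : PreMod K H K), Q.IsMod → P.IsV1 b Q → Q'.IsMod → P.IsV1 b' Q' →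
        ¬ PreMod.Equiv Q Q') ∧
    (∀ b ∈ ({1, -1, i, -i} : Set K),
      ∀ (Q : PreMod K H K) (Q' : PreMod K H (K × K)),
        Q.IsMod → P.IsV1 b Q → Q'.IsMod → P.IsV2 Q' → ¬ PreMod.Equiv Q Q') ∧
    (∀ (M : Type*) [AddCommGroup M] [Module K M] (Q : PreMod K H M),
      Q.IsMod → Q.IsSimple →
      ((∃ b ∈ ({1, -1, i, -i} : Set K), ∃ Q' : PreMod K H K,
          Q'.IsMod ∧ P.IsV1 b Q' ∧ PreMod.Equiv Q Q') ∨
       (∃ Q' : PreMod K H (K × K), Q'.IsMod ∧ P.IsV2 Q' ∧ PreMod.Equiv Q Q'))) := by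
  refine ⟨fun b hb => ?_, ?_, ?_, ?_, fun M _ _ Q hQ hS => P.isV1_or_isV2_of_isSimple hQ hS hi⟩
  · obtain ⟨Q, hQ, hV⟩ := P.exists_isV1 (pow_four_eq_one_of_mem hi b hb)
    exact ⟨Q, hQ, hV, PreMod.isSimple_of_self Q⟩
  · obtain ⟨Q, hQ, hV⟩ := P.exists_isV2
    exact ⟨Q, hQ, hV, hV.isSimple⟩
  · rintro b - b' - hne Q Q' - hV - hV' e
    exact hne (KPAlg.eq_of_isV1_of_equiv hV hV' e)
  · rintro b - Q Q' - - - - e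
    simpa using e.finrank_eq

/-- The Kac–Paljutkin algebra `H₈` has, up to isomorphism, exactly
five simple left modules: the four one-dimensional modules `V₁(b)`, `b ∈ {1,-1,i,-i}`,
and the two-dimensional module `V₂`.  They are simple, pairwise non-isomorphic, and
every simple left `H₈`-module is isomorphic to one of them. -/
theorem classification_simple_modules_over_H8
    [CharZero K] [IsAlgClosed K] (P : KPAlg K H) (i : K) (hi : i ^ 2 = -1) :
    (∀ b ∈ ({1, -1, i, -i} : Set K),
      ∃ Q : PreMod K H K, Q.IsMod ∧ P.IsV1 b Q ∧ Q.IsSimple) ∧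
    (∃ Q : PreMod K H (K × K), Q.IsMod ∧ P.IsV2 Q ∧ Q.IsSimple) ∧
    (∀ b ∈ ({1, -1, i, -i} : Set K), ∀ b' ∈ ({1, -1, i, -i} : Set K), b ≠ b' →
      ∀ (Q Q' : PreMod K H K), Q.IsMod → P.IsV1 b Q → Q'.IsMod → P.IsV1 b' Q' →
        ¬ PreMod.Equiv Q Q') ∧
    (∀ b ∈ ({1, -1, i, -i} : Set K),
      ∀ (Q : PreMod K H K) (Q' : PreMod K H (K × K)),
        Q.IsMod → P.IsV1 b Q → Q'.IsMod → P.IsV2 Q' → ¬ PreMod.Equiv Q Q') ∧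
    (∀ (M : Type*) [AddCommGroup M] [Module K M] (Q : PreMod K H M),
      Q.IsMod → Q.IsSimple →
      ((∃ b ∈ ({1, -1, i, -i} : Set K), ∃ Q' : PreMod K H K,
          Q'.IsMod ∧ P.IsV1 b Q' ∧ PreMod.Equiv Q Q') ∨
       (∃ Q' : PreMod K H (K × K), Q'.IsMod ∧ P.IsV2 Q' ∧ PreMod.Equiv Q Q'))) :=
  classification_simple_modules_over_H8_general P i hi
end
end

section
/- Let a ∈ K with a + 1 = ±√2, set θ = (1/2)(i - 1)(a + 1), and let V be the two-dimensional braided vector space over K with basis w1, w2 and braiding c determined by c(w1⊗w1) = -θ w2⊗w2, c(w1⊗w2) = θ w1⊗w2, c(w2⊗w1) = -θ w2⊗w1, c(w2⊗w2) = θ w1⊗w1 (this is the braiding of the Yetter–Drinfeld module W_1^a over H_8, and it satisfies the braid equation). Then for every n ≥ 1: S_{2n-1,1}((w1⊗w2)^{⊗n}) = ((1+θ)(1-(-θ^2)^n)/(1+θ^2)) · (w1⊗w2)^{⊗n}, and S_{2n,1}((w1⊗w2)^{⊗n} ⊗ w1) = ((1-θ+(-1)^n θ^{2n+1}(1+θ))/(1+θ^2))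 · ((w1⊗w2)^{⊗n} ⊗ w1). -/
open TensorProduct CategoryTheory MonoidalCategory

noncomputable section

universe u

variable (K : Type u) [Field K] (V : Type u) [AddCommGroup V] [Module K V]

/-- The `n`-th tensor power of `V` (normalized with a tensor-unit factor on the left),
as an object of `ModuleCat K`. -/
def TP : ℕ → ModuleCat.{u} K
  | 0 => ModuleCat.of K K
  | n+1 => TP n ⊗ ModuleCat.of K V

variable {K V}

/-- The braiding `c` applied in tensor positions `(k, k+1)` of the `n`-th tensor power
(acting on the `k`-th and `(k+1)`-st copies of `V`); the identity when `k = 0` or `k ≥ n`. -/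
def ck (c : V ⊗[K] V →ₗ[K] V ⊗[K] V) : (n k : ℕ) → (TP K V n ⟶ TP K V n)
  | 0, _ => 𝟙 _
  | 1, _ => 𝟙 _
  | n+2, k =>
    if k = n+1 then
      (α_ (TP K V n) (ModuleCat.of K V) (ModuleCat.of K V)).hom ≫
        ((TP K V n) ◁ (ModuleCat.ofHom c)) ≫
        (α_ (TP K V n) (ModuleCat.of K V) (ModuleCat.of K V)).inv
    else (ck c (n+1) k) ▷ (ModuleCat.of K V)

/-- The partial quantum symmetrizer `S_{j,1} = id + c_j + c_j c_{j-1} + ⋯ + c_j ⋯ c_1`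
on the `n`-th tensor power (for `j = 0` it is the identity). -/
def Sfrag (c : V ⊗[K] V →ₗ[K] V ⊗[K] V) (n : ℕ) : ℕ → (TP K V n ⟶ TP K V n)
  | 0 => 𝟙 _
  | j+1 => 𝟙 _ + (Sfrag c n j ≫ ck c n (j+1))

/-- The quantum symmetrizer `S_n` on the `n`-th tensor power:
`S_1 = id`, `S_n = (S_{n-1} ⊗ id) ∘ S_{n-1,1}`. -/
def Sn (c : V ⊗[K] V →ₗ[K] V ⊗[K] V) : (n : ℕ) → (TP K V n ⟶ TP K V n)
  | 0 => 𝟙 _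
  | 1 => 𝟙 _
  | n+2 => Sfrag c (n+2) (n+1) ≫ ((Sn c (n+1)) ▷ (ModuleCat.of K V))

/-- The rank of the `n`-th graded component `V^{⊗n}/ker S_n` of the Nichols algebra. -/
def nicholsDegRank (c : V ⊗[K] V →ₗ[K] V ⊗[K] V) (n : ℕ) : Cardinal :=
  Module.rank K (↥(TP K V n) ⧸ LinearMap.ker (Sn c n).hom)

/-- The canonical embedding of the `n`-th tensor power into the tensor algebra. -/
def toTA : (n : ℕ) → (↥(TP K V n) →ₗ[K] TensorAlgebra K V)
  | 0 => Algebra.linearMap K (TensorAlgebra K V)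
  | n+1 => TensorProduct.lift
      (((LinearMap.mul K (TensorAlgebra K V)).comp (toTA n)).compl₂
        (TensorAlgebra.ι K (M := V)))

/-- The Nichols algebra of the braided vector space `(V, c)`: the quotient of the
tensor algebra `T(V)` by the (ideal generated by the) kernels of the quantum
symmetrizers. -/
def NicholsAlgebra (c : V ⊗[K] V →ₗ[K] V ⊗[K] V) : Type u :=
  RingQuot (fun a b : TensorAlgebra K V =>
    (∃ n, 2 ≤ n ∧ ∃ t ∈ LinearMap.ker (Sn c n).hom, toTA n t = a) ∧ b = 0)

instance (c : V ⊗[K] V →ₗ[K] V ⊗[K] V) : Ring (NicholsAlgebra c) := by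
  unfold NicholsAlgebra; infer_instance

instance (c : V ⊗[K] V →ₗ[K] V ⊗[K] V) : Algebra K (NicholsAlgebra c) := by
  unfold NicholsAlgebra; infer_instance
/-- The element `(w₁ ⊗ w₂)^{⊗n}` of the `2n`-th tensor power. -/
def welt (w1 w2 : V) : (n : ℕ) → ↥(TP K V (2*n))
  | 0 => (1 : K)
  | n+1 => (welt w1 w2 n ⊗ₜ[K] w1) ⊗ₜ[K] w2

end

/-!
On `w₁ ⊗ w₂` and `w₂ ⊗ w₁` the braiding acts diagonally, by `θ` and `-θ`. Hence the words
`(w₁w₂)ⁿ` and `(w₁w₂)ⁿw₁` are common eigenvectors of all the `c_k` in range, `c_k` acting by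
`(-1)^(k+1) θ`, and the recursion `S_{j,1} = id + c_j S_{j-1,1}` makes them eigenvectors of
`S_{j,1}` with eigenvalue `s_j = 1 + (-1)^(j+1) θ s_{j-1}`. Solving this recursion needs
`1 + θ² ≠ 0`, which holds because `θ² = -i`.
-/

open TensorProduct CategoryTheory MonoidalCategory

def symmetrizerEigenvalue {R : Type*} [Semiring R] (μ : ℕ → R) : ℕ → R
  | 0 => 1
  | j + 1 => 1 + μ (j + 1) * symmetrizerEigenvalue μ j

lemma symmetrizerEigenvalue_alternating {R : Type*} [CommRing R] (θ : R) (n : ℕ) :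
    symmetrizerEigenvalue (fun k => (-1) ^ (k + 1) * θ) (2 * n) * (1 + θ ^ 2) =
        1 - θ + (-1) ^ n * θ ^ (2 * n + 1) * (1 + θ) ∧
    symmetrizerEigenvalue (fun k => (-1) ^ (k + 1) * θ) (2 * n + 1) * (1 + θ ^ 2) =
        (1 + θ) * (1 - (-θ ^ 2) ^ (n + 1)) := by
  induction n with
  | zero => simp only [symmetrizerEigenvalue]; constructor <;> ring
  | succ m ih =>
    have heven : symmetrizerEigenvalue (fun k => (-1) ^ (k + 1) * θ) (2 * m + 2) * (1 + θ ^ 2) =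
        1 - θ + (-1) ^ (m + 1) * θ ^ (2 * (m + 1) + 1) * (1 + θ) := by
      have hsign : (-1 : R) ^ (2 * m + 1 + 1 + 1) = -1 := Odd.neg_one_pow ⟨m + 1, by ring⟩
      rw [symmetrizerEigenvalue, hsign]
      linear_combination (-θ) * ih.2
    have hsign : (-1 : R) ^ (2 * (m + 1) + 1 + 1) = 1 := Even.neg_one_pow ⟨m + 2, by ring⟩
    refine ⟨heven, ?_⟩
    rw [symmetrizerEigenvalue, hsign]
    linear_combination θ * heven

universe v

section Braiding

variable {K : Type v} [Field K] {V : Type v} [AddCommGroup V] [Module K V]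
  (c : V ⊗[K] V →ₗ[K] V ⊗[K] V)

lemma ck_self_apply_tmul_tmul_of_eq_smul {n : ℕ} (x : TP K V n) {v w : V} {s : K}
    (hvw : c (v ⊗ₜ[K] w) = s • (v ⊗ₜ[K] w)) :
    ck c (n + 2) (n + 1) ((x ⊗ₜ[K] v) ⊗ₜ[K] w) = s • ((x ⊗ₜ[K] v) ⊗ₜ[K] w) := by
  simp only [ck, ↓reduceIte]
  change (TensorProduct.assoc K _ _ _).symm (x ⊗ₜ[K] c (v ⊗ₜ[K] w)) = _
  rw [hvw, tmul_smul, map_smul, TensorProduct.assoc_symm_tmul]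

lemma ck_apply_tmul_of_eq_smul {n k : ℕ} (hk : k ≠ n + 1) {x : TP K V (n + 1)} {s : K}
    (hx : ck c (n + 1) k x = s • x) (w : V) :
    ck c (n + 2) k (x ⊗ₜ[K] w) = s • (x ⊗ₜ[K] w) := by
  simp only [ck, hk, ↓reduceIte]
  change ck c (n + 1) k x ⊗ₜ[K] w = _
  rw [hx, smul_tmul']

lemma ck_apply_welt_of_eq_smul {w₁ w₂ : V} {θ : K}
    (h₁₂ : c (w₁ ⊗ₜ[K] w₂) = θ • (w₁ ⊗ₜ[K] w₂)) (h₂₁ : c (w₂ ⊗ₜ[K] w₁) = (-θ) • (w₂ ⊗ₜ[K] w₁))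
    (n : ℕ) :
    (∀ k, 1 ≤ k → k ≤ 2 * n - 1 →
      ck c (2 * n) k (welt w₁ w₂ n) = ((-1) ^ (k + 1) * θ) • welt w₁ w₂ n) ∧
    (∀ k, 1 ≤ k → k ≤ 2 * n →
      ck c (2 * n + 1) k (welt w₁ w₂ n ⊗ₜ[K] w₁) =
        ((-1) ^ (k + 1) * θ) • (welt w₁ w₂ n ⊗ₜ[K] w₁)) := by
  induction n with
  | zero => constructor <;> intro k _ _ <;> omega
  | succ m ih =>
    have hwelt : ∀ k, 1 ≤ k → k ≤ 2 * m + 1 →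
        ck c (2 * m + 2) k (welt w₁ w₂ (m + 1)) = ((-1) ^ (k + 1) * θ) • welt w₁ w₂ (m + 1) := by
      intro k hk₁ hk₂
      rcases eq_or_ne k (2 * m + 1) with rfl | hk
      · rw [(show Even (2 * m + 1 + 1) from ⟨m + 1, by ring⟩).neg_one_pow, one_mul]
        exact ck_self_apply_tmul_tmul_of_eq_smul c _ h₁₂
      · exact ck_apply_tmul_of_eq_smul c hk (ih.2 k hk₁ (by omega)) w₂
    refine ⟨fun k hk₁ hk₂ => hwelt k hk₁ (by omega), fun k hk₁ hk₂ => ?_⟩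
    rcases eq_or_ne k (2 * m + 2) with rfl | hk
    · rw [(show Odd (2 * m + 2 + 1) from ⟨m + 1, by ring⟩).neg_one_pow, neg_one_mul]
      exact ck_self_apply_tmul_tmul_of_eq_smul c _ h₂₁
    · exact ck_apply_tmul_of_eq_smul c (by omega) (hwelt k hk₁ (by omega)) w₁

lemma Sfrag_apply_of_forall_ck_apply {N : ℕ} (μ : ℕ → K) {x : TP K V N} (j : ℕ)
    (hx : ∀ k, 1 ≤ k → k ≤ j → ck c N k x = μ k • x) :
    Sfrag c N j x = symmetrizerEigenvalue μ j • x := by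
  induction j with
  | zero => simp [Sfrag, symmetrizerEigenvalue]
  | succ j ih =>
    have hSx : Sfrag c N (j + 1) x = x + ck c N (j + 1) (Sfrag c N j x) := rfl
    rw [hSx, ih fun k hk₁ hk₂ => hx k hk₁ (by omega), map_smul, hx (j + 1) (by omega) le_rfl,
      smul_smul, symmetrizerEigenvalue, add_smul, one_smul, mul_comm]

end Braiding

theorem quantum_symmetrizer_eigenvalues_W1a_general
    {K : Type*} [Field K] [CharZero K]
    (i sq2 : K) (hi : i ^ 2 = -1) (hsq2 : sq2 ^ 2 = 2)
    (a : K) (ha : a + 1 = sq2 ∨ a + 1 = -sq2)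
    (θ : K) (hθ : θ = (2:K)⁻¹ * (i - 1) * (a + 1))
    (c : (K × K) ⊗[K] (K × K) →ₗ[K] (K × K) ⊗[K] (K × K))
    (hc12 : c (((1:K), (0:K)) ⊗ₜ[K] ((0:K), (1:K))) =
      θ • (((1:K), (0:K)) ⊗ₜ[K] ((0:K), (1:K))))
    (hc21 : c (((0:K), (1:K)) ⊗ₜ[K] ((1:K), (0:K))) =
      (-θ) • (((0:K), (1:K)) ⊗ₜ[K] ((1:K), (0:K)))) :
    ∀ n : ℕ, 1 ≤ n →
      Sfrag c (2*n) (2*n - 1) (welt ((1:K), (0:K)) ((0:K), (1:K)) n) =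
        ((1 + θ) * (1 - (-θ^2)^n) / (1 + θ^2)) •
          welt ((1:K), (0:K)) ((0:K), (1:K)) n ∧
      Sfrag c (2*n+1) (2*n) ((welt ((1:K), (0:K)) ((0:K), (1:K)) n) ⊗ₜ[K] ((1:K), (0:K))) =
        ((1 - θ + (-1:K)^n * θ^(2*n+1) * (1 + θ)) / (1 + θ^2)) •
          ((welt ((1:K), (0:K)) ((0:K), (1:K)) n) ⊗ₜ[K] ((1:K), (0:K))) := by
  have hθ_sq : θ ^ 2 = -i := by
    have ha_sq : (a + 1) ^ 2 = 2 := by rcases ha with h | h <;> simp [h, hsq2]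
    rw [hθ]
    linear_combination (4⁻¹ * (i - 1) ^ 2) * ha_sq + 2⁻¹ * hi
  have hne : 1 + θ ^ 2 ≠ 0 := by
    rw [hθ_sq]
    intro h
    exact two_ne_zero (by linear_combination (1 + i) * h + hi : (2 : K) = 0)
  intro n hn
  obtain ⟨hwelt, hwelt_tmul⟩ := ck_apply_welt_of_eq_smul c hc12 hc21 n
  obtain ⟨hs_even, -⟩ := symmetrizerEigenvalue_alternating θ n
  obtain ⟨m, rfl⟩ := Nat.exists_eq_add_of_le' hn
  obtain ⟨-, hs_odd⟩ := symmetrizerEigenvalue_alternating θ m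
  rw [← eq_div_iff hne] at hs_even hs_odd
  rw [Sfrag_apply_of_forall_ck_apply c _ _ hwelt, Sfrag_apply_of_forall_ck_apply c _ _ hwelt_tmul,
    show 2 * (m + 1) - 1 = 2 * m + 1 by omega, hs_odd, hs_even]
  exact ⟨rfl, rfl⟩

/-- For the two-dimensional braided vector space with braiding
`c(w₁⊗w₁) = -θ w₂⊗w₂`, `c(w₁⊗w₂) = θ w₁⊗w₂`, `c(w₂⊗w₁) = -θ w₂⊗w₁`,
`c(w₂⊗w₂) = θ w₁⊗w₁` (where `θ = (1/2)(i-1)(a+1)` and `a + 1 = ±√2`), the vectors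
`(w₁⊗w₂)^{⊗n}` and `(w₁⊗w₂)^{⊗n} ⊗ w₁` are eigenvectors of the quantum
symmetrizers `S_{2n-1,1}` and `S_{2n,1}` with the indicated eigenvalues. -/
theorem quantum_symmetrizer_eigenvalues_W1a
    {K : Type*} [Field K] [CharZero K] [IsAlgClosed K]
    (i sq2 : K) (hi : i ^ 2 = -1) (hsq2 : sq2 ^ 2 = 2)
    (a : K) (ha : a + 1 = sq2 ∨ a + 1 = -sq2)
    (θ : K) (hθ : θ = (2:K)⁻¹ * (i - 1) * (a + 1))
    (c : (K × K) ⊗[K] (K × K) →ₗ[K] (K × K) ⊗[K] (K × K))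
    (hc11 : c (((1:K), (0:K)) ⊗ₜ[K] ((1:K), (0:K))) =
      (-θ) • (((0:K), (1:K)) ⊗ₜ[K] ((0:K), (1:K))))
    (hc12 : c (((1:K), (0:K)) ⊗ₜ[K] ((0:K), (1:K))) =
      θ • (((1:K), (0:K)) ⊗ₜ[K] ((0:K), (1:K))))
    (hc21 : c (((0:K), (1:K)) ⊗ₜ[K] ((1:K), (0:K))) =
      (-θ) • (((0:K), (1:K)) ⊗ₜ[K] ((1:K), (0:K))))
    (hc22 : c (((0:K), (1:K)) ⊗ₜ[K] ((0:K), (1:K))) =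
      θ • (((1:K), (0:K)) ⊗ₜ[K] ((1:K), (0:K)))) :
    ∀ n : ℕ, 1 ≤ n →
      Sfrag c (2*n) (2*n - 1) (welt ((1:K), (0:K)) ((0:K), (1:K)) n) =
        ((1 + θ) * (1 - (-θ^2)^n) / (1 + θ^2)) •
          welt ((1:K), (0:K)) ((0:K), (1:K)) n ∧
      Sfrag c (2*n+1) (2*n) ((welt ((1:K), (0:K)) ((0:K), (1:K)) n) ⊗ₜ[K] ((1:K), (0:K))) =
        ((1 - θ + (-1:K)^n * θ^(2*n+1) * (1 + θ)) / (1 + θ^2)) •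
          ((welt ((1:K), (0:K)) ((0:K), (1:K)) n) ⊗ₜ[K] ((1:K), (0:K))) :=
  quantum_symmetrizer_eigenvalues_W1a_general i sq2 hi hsq2 a ha θ hθ c hc12 hc21
end
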